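/- arXiv:1912.03512 — 2 statements merged into one kernel-verified Lean document; each statement's English description precedes it below -/
import Mathlib

section
/- (Ambrosetti–Rabinowitz-type inequality from homogeneity of the derivative.) Let l > 0 be a real number and let g : [0, ∞) → ℝ be continuous with g(0) = 0 and differentiable on (0, ∞), such that the map t ↦ g′(t)/t^l is nondecreasing on (0, ∞). Then t g′(t) ≥ (l + 1) g(t) for all t > 0. -/
/-!
Write `g' s = φ s * s ^ l` with `φ` nondecreasing. On `(0, t)` this gives `g' s ≤ φ t * s ^ l`,
and integrating from `0` (where `g` vanishes) yields `g t ≤ φ t * t ^ (l + 1) / (l + 1)`,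
which is `(l + 1) * g t ≤ t * g' t`.
-/

open Set

theorem sub_le_sub_of_hasDerivAt_le {f g f' g' : ℝ → ℝ} {a b : ℝ} (hab : a ≤ b)
    (hf : ContinuousOn f (Icc a b)) (hg : ContinuousOn g (Icc a b))
    (hf' : ∀ x ∈ Ioo a b, HasDerivAt f (f' x) x) (hg' : ∀ x ∈ Ioo a b, HasDerivAt g (g' x) x)
    (hle : ∀ x ∈ Ioo a b, f' x ≤ g' x) :
    f b - f a ≤ g b - g a := by
  have hmono : MonotoneOn (fun x => g x - f x) (Icc a b) := by
    refine monotoneOn_of_hasDerivWithinAt_nonneg (f' := fun x => g' x - f' x) (convex_Icc a b)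
      (hg.sub hf) (fun x hx => ?_) (fun x hx => ?_)
    · rw [interior_Icc] at hx
      exact ((hg' x hx).sub (hf' x hx)).hasDerivWithinAt
    · rw [interior_Icc] at hx
      exact sub_nonneg.mpr (hle x hx)
  have hend := hmono (left_mem_Icc.mpr hab) (right_mem_Icc.mpr hab) hab
  linarith

theorem Real.hasDerivAt_rpow_add_one_div {l x : ℝ} (hl : l + 1 ≠ 0) (hx : x ≠ 0) :
    HasDerivAt (fun s => s ^ (l + 1) / (l + 1)) (x ^ l) x := by
  refine ((Real.hasDerivAt_rpow_const (p := l + 1) (Or.inl hx)).div_const (l + 1)).congr_deriv ?_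
  rw [add_sub_cancel_right, mul_div_cancel_left₀ _ hl]

theorem sub_le_mul_rpow_div_of_deriv_le_mul_rpow {g g' : ℝ → ℝ} {l c t : ℝ} (hl : -1 < l)
    (ht : 0 ≤ t) (hcont : ContinuousOn g (Icc 0 t))
    (hderiv : ∀ s ∈ Ioo 0 t, HasDerivAt g (g' s) s) (hle : ∀ s ∈ Ioo 0 t, g' s ≤ c * s ^ l) :
    g t - g 0 ≤ c * (t ^ (l + 1) / (l + 1)) := by
  have hl1 : l + 1 ≠ 0 := by linarith
  have hpow : ContinuousOn (fun s : ℝ => c * (s ^ (l + 1) / (l + 1))) (Icc 0 t) :=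
    (continuous_const.mul ((Real.continuous_rpow_const (by linarith)).div_const _)).continuousOn
  have hpow' : ∀ s ∈ Ioo 0 t, HasDerivAt (fun s : ℝ => c * (s ^ (l + 1) / (l + 1))) (c * s ^ l) s :=
    fun s hs => (Real.hasDerivAt_rpow_add_one_div hl1 hs.1.ne').const_mul c
  have hcomp := sub_le_sub_of_hasDerivAt_le ht hcont hpow hderiv hpow' hle
  simpa [Real.zero_rpow hl1] using hcomp

/-- Ambrosetti–Rabinowitz-type inequality from homogeneity of the derivative:
if `g` is continuous on `[0,∞)` with `g 0 = 0`, differentiable on `(0,∞)` with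
derivative `g'`, and `t ↦ g'(t)/t^l` is nondecreasing on `(0,∞)`, then
`t g'(t) ≥ (l+1) g(t)` for all `t > 0`. -/
theorem ambrosetti_rabinowitz_of_monotone_deriv
    (l : ℝ) (hl : 0 < l) (g g' : ℝ → ℝ)
    (hcont : ContinuousOn g (Set.Ici 0)) (hg0 : g 0 = 0)
    (hderiv : ∀ t : ℝ, 0 < t → HasDerivAt g (g' t) t)
    (hmono : ∀ s t : ℝ, 0 < s → s ≤ t → g' s / s ^ l ≤ g' t / t ^ l) :
    ∀ t : ℝ, 0 < t → (l + 1) * g t ≤ t * g' t := by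
  intro t ht
  have hle : ∀ s ∈ Ioo 0 t, g' s ≤ g' t / t ^ l * s ^ l := fun s hs =>
    (div_le_iff₀ (Real.rpow_pos_of_pos hs.1 l)).mp (hmono s t hs.1 hs.2.le)
  have hbound := sub_le_mul_rpow_div_of_deriv_le_mul_rpow (by linarith) ht.le
    (hcont.mono Icc_subset_Ici_self) (fun s hs => hderiv s hs.1) hle
  have hrhs : g' t / t ^ l * (t ^ (l + 1) / (l + 1)) = t * g' t / (l + 1) := by
    rw [Real.rpow_add_one ht.ne']
    field_simp [(Real.rpow_pos_of_pos ht l).ne']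
  rw [hg0, sub_zero, hrhs, le_div_iff₀ (by linarith)] at hbound
  linarith
end

section
/- Let n ≥ 1 be an integer and let F : ℝ² → ℝ be continuously differentiable and nonnegative, satisfying t ∂F/∂t(t, s) ≥ n F(t, s) and s ∂F/∂s(t, s) ≥ n F(t, s) for all t, s > 0. Then for all fixed u > 0 and v > 0, the map t ↦ F(tu, tv)/tⁿ is nondecreasing on (0, ∞). -/
/-! Along the ray `t ↦ (t u, t v)` the chain rule gives
`t · d/dt F(tu, tv) = (tu) ∂F/∂t + (tv) ∂F/∂s ≥ 2n F ≥ n F`, using `F ≥ 0`.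
A function `φ` with `t φ' ≥ n φ` on `(0, ∞)` has `(φ / tⁿ)' = (t φ' - n φ) / t^(n+1) ≥ 0`. -/

open Set

lemma natCast_mul_pow_sub_one_mul (n : ℕ) (t : ℝ) :
    (n : ℝ) * t ^ (n - 1) * t = n * t ^ n := by
  rcases Nat.eq_zero_or_pos n with rfl | hn
  · simp
  · rw [mul_assoc, pow_sub_one_mul hn.ne']

theorem monotoneOn_div_pow_of_le_mul_deriv {φ φ' : ℝ → ℝ} (n : ℕ)
    (hφ : ∀ t ∈ Ioi (0 : ℝ), HasDerivAt φ (φ' t) t)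
    (hle : ∀ t ∈ Ioi (0 : ℝ), (n : ℝ) * φ t ≤ t * φ' t) :
    MonotoneOn (fun t => φ t / t ^ n) (Ioi 0) := by
  have hquot : ∀ t ∈ Ioi (0 : ℝ), HasDerivAt (fun t => φ t / t ^ n)
      ((φ' t * t ^ n - φ t * (n * t ^ (n - 1))) / (t ^ n) ^ 2) t := fun t ht =>
    (hφ t ht).div (hasDerivAt_pow n t) (pow_ne_zero n (ne_of_gt ht))
  refine monotoneOn_of_hasDerivWithinAt_nonneg (convex_Ioi 0)
    (fun t ht => (hquot t ht).continuousAt.continuousWithinAt)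
    (fun t ht => (hquot t (interior_subset ht)).hasDerivWithinAt) fun t ht => ?_
  rw [interior_Ioi] at ht
  have ht' : (0 : ℝ) < t := ht
  have hnum : t * (φ' t * t ^ n - φ t * (n * t ^ (n - 1))) = t ^ n * (t * φ' t - n * φ t) := by
    linear_combination -φ t * natCast_mul_pow_sub_one_mul n t
  refine div_nonneg ?_ (sq_nonneg _)
  refine (mul_nonneg_iff_of_pos_left ht').mp ?_
  rw [hnum]
  exact mul_nonneg (pow_nonneg ht'.le n) (sub_nonneg.mpr (hle t ht))

lemma ContinuousLinearMap.apply_prod_eq (L : ℝ × ℝ →L[ℝ] ℝ) (u v : ℝ) :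
    L (u, v) = u * L (1, 0) + v * L (0, 1) := by
  have huv : ((u, v) : ℝ × ℝ) = u • ((1, 0) : ℝ × ℝ) + v • ((0, 1) : ℝ × ℝ) := by
    simp
  rw [huv, map_add, map_smul, map_smul, smul_eq_mul, smul_eq_mul]

lemma hasDerivAt_comp_ray {F : ℝ × ℝ → ℝ} {t : ℝ} (u v : ℝ)
    (hF : DifferentiableAt ℝ F (t * u, t * v)) :
    HasDerivAt (fun t : ℝ => F (t * u, t * v)) (fderiv ℝ F (t * u, t * v) (u, v)) t :=
  hF.hasFDerivAt.comp_hasDerivAt t ((hasDerivAt_mul_const u).prodMk (hasDerivAt_mul_const v))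

theorem monotone_fibering_map_general
    (n : ℕ) (F : ℝ × ℝ → ℝ)
    (hF : ContDiff ℝ 1 F) (hFnonneg : ∀ p : ℝ × ℝ, 0 ≤ F p)
    (hF1 : ∀ t s : ℝ, 0 < t → 0 < s →
      (n : ℝ) * F (t, s) ≤ t * fderiv ℝ F (t, s) (1, 0))
    (hF2 : ∀ t s : ℝ, 0 < t → 0 < s →
      (n : ℝ) * F (t, s) ≤ s * fderiv ℝ F (t, s) (0, 1)) :
    ∀ u v : ℝ, 0 < u → 0 < v →
      MonotoneOn (fun t : ℝ => F (t * u, t * v) / t ^ n) (Set.Ioi 0) := by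
  intro u v hu hv
  refine monotoneOn_div_pow_of_le_mul_deriv n
    (fun t _ => hasDerivAt_comp_ray u v (hF.differentiable one_ne_zero _)) fun t ht => ?_
  have ht' : (0 : ℝ) < t := ht
  have h1 := hF1 (t * u) (t * v) (mul_pos ht' hu) (mul_pos ht' hv)
  have h2 := hF2 (t * u) (t * v) (mul_pos ht' hu) (mul_pos ht' hv)
  have hnF : 0 ≤ (n : ℝ) * F (t * u, t * v) := mul_nonneg n.cast_nonneg (hFnonneg _)
  rw [ContinuousLinearMap.apply_prod_eq]
  linarith

/-- If `F : ℝ² → ℝ` is `C¹`, nonnegative, and satisfies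
`t ∂F/∂t(t,s) ≥ n F(t,s)` and `s ∂F/∂s(t,s) ≥ n F(t,s)` for `t, s > 0`, then for fixed
`u, v > 0` the map `t ↦ F(tu, tv)/tⁿ` is nondecreasing on `(0, ∞)`. -/
theorem monotone_fibering_map
    (n : ℕ) (hn : 1 ≤ n) (F : ℝ × ℝ → ℝ)
    (hF : ContDiff ℝ 1 F) (hFnonneg : ∀ p : ℝ × ℝ, 0 ≤ F p)
    (hF1 : ∀ t s : ℝ, 0 < t → 0 < s →
      (n : ℝ) * F (t, s) ≤ t * fderiv ℝ F (t, s) (1, 0))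
    (hF2 : ∀ t s : ℝ, 0 < t → 0 < s →
      (n : ℝ) * F (t, s) ≤ s * fderiv ℝ F (t, s) (0, 1)) :
    ∀ u v : ℝ, 0 < u → 0 < v →
      MonotoneOn (fun t : ℝ => F (t * u, t * v) / t ^ n) (Set.Ioi 0) :=
  monotone_fibering_map_general n F hF hFnonneg hF1 hF2
end
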